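/- arXiv:1205.2295 — 3 statements merged into one kernel-verified Lean document; each statement's English description precedes it below -/
import Mathlib

section
/- Let b > 0, T > 0, x, m, r ∈ ℝ, and set λ0 = (1/b)·e^{(x−m)/b}. Then ∫_0^T e^{−rs}·exp(b·λ0·(1 − e^{s/b})) ds = ( b·Γ(−rb, e^{(x−m)/b}) − b·Γ(−rb, e^{(x−m+T)/b}) ) / exp( (m−x)·r − e^{(x−m)/b} ), where Γ(a, z) = ∫_z^∞ t^{a−1}·e^{−t} dt denotes the upper incomplete gamma function (for z > 0 this integral converges for every real a). -/
/-!
Substituting `t = c * exp (s / b)` with `c = exp ((x - m) / b)`, the discount factor `exp (-r s)`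
becomes `(t / c) ^ (-r b)`, the survival probability becomes `exp c * exp (-t)` and
`ds = b dt / t`, so the present value is `b * exp c * c ^ (r b)` times the integral of
`t ^ (-r b - 1) * exp (-t)` over `[c, c * exp (T / b)]`, a difference of two upper incomplete
gamma values.
-/

/-- The upper incomplete gamma function Γ(a, z) = ∫_z^∞ t^{a−1}·e^{−t} dt. -/
noncomputable def upperIncompleteGamma (a z : ℝ) : ℝ :=
  ∫ t in Set.Ioi z, t ^ (a - 1) * Real.exp (-t)

open Real MeasureTheory Set intervalIntegral Filter Asymptotics

theorem integrableOn_rpow_mul_exp_neg_Ioi (a : ℝ) {z : ℝ} (hz : 0 < z) :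
    IntegrableOn (fun t : ℝ => t ^ a * exp (-t)) (Ioi z) := by
  refine integrable_of_isBigO_exp_neg one_half_pos
    ((continuousOn_id.rpow_const fun t ht => Or.inl (hz.trans_le ht).ne').mul
      (continuous_exp.comp continuous_neg).continuousOn) ?_
  have hdecay : (fun t : ℝ => t ^ a * exp (-(1 / 2) * t)) =O[atTop] fun _ => (1 : ℝ) :=
    (tendsto_rpow_mul_exp_neg_mul_atTop_nhds_zero a (1 / 2) one_half_pos).isBigO_one ℝ
  refine (hdecay.mul (isBigO_refl (fun t : ℝ => exp (-(1 / 2) * t)) atTop)).congr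
    (fun t => ?_) fun t => one_mul _
  rw [mul_assoc, ← exp_add]
  ring_nf

theorem upperIncompleteGamma_sub (a : ℝ) {z w : ℝ} (hz : 0 < z) (hw : 0 < w) :
    upperIncompleteGamma a z - upperIncompleteGamma a w
      = ∫ t in z..w, t ^ (a - 1) * exp (-t) :=
  integral_Ioi_sub_Ioi' (integrableOn_rpow_mul_exp_neg_Ioi _ hz)
    (integrableOn_rpow_mul_exp_neg_Ioi _ hw)

theorem integral_rpow_mul_exp_neg_comp_mul_exp (a : ℝ) {b c : ℝ} (hb : b ≠ 0) (hc : 0 < c)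
    (u v : ℝ) :
    ∫ s in u..v, (c * exp (s / b)) ^ a * exp (-(c * exp (s / b)))
      = b * ∫ t in c * exp (u / b)..c * exp (v / b), t ^ (a - 1) * exp (-t) := by
  set f : ℝ → ℝ := fun s => c * exp (s / b)
  have hf_pos (s : ℝ) : 0 < f s := mul_pos hc (exp_pos _)
  have hf_deriv (s : ℝ) : HasDerivAt f (f s / b) s := by
    refine ((((hasDerivAt_id s).div_const b).exp).const_mul c).congr_deriv ?_
    simp only [f, id]
    ring
  have hg_cont : ContinuousOn (fun t : ℝ => t ^ (a - 1) * exp (-t)) (f '' uIcc u v) := by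
    rintro _ ⟨s, -, rfl⟩
    exact ((continuousAt_id.rpow_const (Or.inl (hf_pos s).ne')).mul
      (continuous_exp.comp continuous_neg).continuousAt).continuousWithinAt
  have hsubst := integral_comp_mul_deriv' (fun s _ => hf_deriv s)
    (by fun_prop : Continuous fun s => f s / b).continuousOn hg_cont
  rw [← hsubst, ← intervalIntegral.integral_const_mul]
  refine integral_congr fun s _ => ?_
  simp only [Function.comp_apply, rpow_sub_one (hf_pos s).ne']
  field_simp [(hf_pos s).ne']
  rfl

theorem exp_neg_mul_mul_exp_mul_one_sub_exp {b c : ℝ} (hb : b ≠ 0) (hc : 0 < c) (r s : ℝ) :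
    exp (-(r * s)) * exp (c * (1 - exp (s / b)))
      = exp c * c ^ (r * b) * ((c * exp (s / b)) ^ (-(r * b)) * exp (-(c * exp (s / b)))) := by
  have hcancel : c ^ (r * b) * c ^ (-(r * b)) = 1 := by
    rw [← rpow_add hc, add_neg_cancel, rpow_zero]
  have hexp : exp (s / b) ^ (-(r * b)) = exp (-(r * s)) := by
    rw [← exp_mul]; congr 1; field_simp
  have hsplit : exp (c * (1 - exp (s / b))) = exp c * exp (-(c * exp (s / b))) := by
    rw [← exp_add]; ring_nf
  rw [mul_rpow hc.le (exp_pos _).le, hexp, hsplit]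
  linear_combination (-(exp (-(r * s)) * exp c * exp (-(c * exp (s / b))))) * hcancel

theorem integral_exp_neg_mul_mul_exp_mul_one_sub_exp {b c : ℝ} (hb : b ≠ 0) (hc : 0 < c)
    (r T : ℝ) :
    ∫ s in (0 : ℝ)..T, exp (-(r * s)) * exp (c * (1 - exp (s / b)))
      = b * exp c * c ^ (r * b) * (upperIncompleteGamma (-(r * b)) c
          - upperIncompleteGamma (-(r * b)) (c * exp (T / b))) := by
  rw [integral_congr fun s _ => exp_neg_mul_mul_exp_mul_one_sub_exp hb hc r s,
    intervalIntegral.integral_const_mul, integral_rpow_mul_exp_neg_comp_mul_exp _ hb hc,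
    zero_div, exp_zero, mul_one, upperIncompleteGamma_sub _ hc (mul_pos hc (exp_pos _))]
  ring

theorem gompertz_present_value_general
    (b T x m r : ℝ) (hb : 0 < b)
    (lam0 : ℝ) (hlam0 : lam0 = (1 / b) * Real.exp ((x - m) / b)) :
    (∫ s in (0:ℝ)..T, Real.exp (-(r * s)) * Real.exp (b * lam0 * (1 - Real.exp (s / b))))
      = (b * upperIncompleteGamma (-(r * b)) (Real.exp ((x - m) / b))
          - b * upperIncompleteGamma (-(r * b)) (Real.exp ((x - m + T) / b)))
        / Real.exp ((m - x) * r - Real.exp ((x - m) / b)) := by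
  set c := exp ((x - m) / b)
  have hblam : b * lam0 = c := by rw [hlam0]; field_simp
  have hcT : exp ((x - m + T) / b) = c * exp (T / b) := by rw [← exp_add, add_div]
  have hcpow : c ^ (r * b) = exp ((x - m) * r) := by rw [← exp_mul]; congr 1; field_simp
  have hunit : exp c * exp ((x - m) * r) * exp ((m - x) * r - c) = 1 := by
    rw [← exp_add, ← exp_add, exp_eq_one_iff]; ring
  rw [hblam, integral_exp_neg_mul_mul_exp_mul_one_sub_exp hb.ne' (exp_pos _), hcT, hcpow,
    eq_div_iff (exp_ne_zero _)]
  linear_combination b * (upperIncompleteGamma (-(r * b)) c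
    - upperIncompleteGamma (-(r * b)) (c * exp (T / b))) * hunit

/-- Closed form for the Gompertz present value (annuity) integral:
∫_0^T e^{−rs}·exp(b·λ0·(1 − e^{s/b})) ds
  = (b·Γ(−rb, e^{(x−m)/b}) − b·Γ(−rb, e^{(x−m+T)/b})) / exp((m−x)·r − e^{(x−m)/b}),
where λ0 = (1/b)·e^{(x−m)/b}. -/
theorem gompertz_present_value
    (b T x m r : ℝ) (hb : 0 < b) (hT : 0 < T)
    (lam0 : ℝ) (hlam0 : lam0 = (1 / b) * Real.exp ((x - m) / b)) :
    (∫ s in (0:ℝ)..T, Real.exp (-(r * s)) * Real.exp (b * lam0 * (1 - Real.exp (s / b))))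
      = (b * upperIncompleteGamma (-(r * b)) (Real.exp ((x - m) / b))
          - b * upperIncompleteGamma (-(r * b)) (Real.exp ((x - m + T) / b)))
        / Real.exp ((m - x) * r - Real.exp ((x - m) / b)) :=
  gompertz_present_value_general b T x m r hb lam0 hlam0
end

section
/- Let r ∈ ℝ, γ > 0, D > 0, F0 ∈ ℝ, c0 ∈ ℝ, and let p : [0, D] → (0, ∞) be continuous. Suppose F : [0, D] → ℝ is differentiable with F(0) = F0, F(D) = 0, and F'(t) = r·F(t) − c0·p(t)^{1/γ} for all t ∈ [0, D]. Then c0 = F0 / ∫_0^D e^{−rs}·p(s)^{1/γ} ds; that is, the initial withdrawal rate is c0/F0 = 1/∫_0^D e^{−rs}·p(s)^{1/γ} ds. -/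
open Real Set

/-! Multiplying by the integrating factor `e^{-rt}` turns `F' = rF - c` into
`(e^{-rt} F)' = -e^{-rt} c`, so integrating over `[0, D]` with `F D = 0` gives
`F0 = c0 ∫_0^D e^{-rs} p(s)^{1/γ} ds`, and the integral is positive. -/

theorem hasDerivAt_exp_neg_mul_mul_of_linear {F : ℝ → ℝ} {r g t : ℝ}
    (hF : HasDerivAt F (r * F t - g) t) :
    HasDerivAt (fun s => exp (-(r * s)) * F s) (-(exp (-(r * t)) * g)) t := by
  have hexp : HasDerivAt (fun s => exp (-(r * s))) (exp (-(r * t)) * -r) t :=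
    ((hasDerivAt_id t).const_mul r).neg.exp.congr_deriv (by simp)
  exact (hexp.mul hF).congr_deriv (by ring)

theorem integral_exp_neg_mul_eq_of_hasDerivAt_linear {F g : ℝ → ℝ} {r a b : ℝ} (hab : a ≤ b)
    (hg : ContinuousOn g (Icc a b))
    (hF : ∀ t ∈ Icc a b, HasDerivAt F (r * F t - g t) t) :
    ∫ s in a..b, exp (-(r * s)) * g s = exp (-(r * a)) * F a - exp (-(r * b)) * F b := by
  have hint : IntervalIntegrable (fun s => -(exp (-(r * s)) * g s)) MeasureTheory.volume a b := by
    refine ContinuousOn.intervalIntegrable ?_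
    rw [uIcc_of_le hab]
    fun_prop
  have hderiv : ∀ t ∈ uIcc a b,
      HasDerivAt (fun s => exp (-(r * s)) * F s) (-(exp (-(r * t)) * g t)) t := by
    rw [uIcc_of_le hab]
    exact fun t ht => hasDerivAt_exp_neg_mul_mul_of_linear (hF t ht)
  have := intervalIntegral.integral_eq_sub_of_hasDerivAt hderiv hint
  rw [intervalIntegral.integral_neg] at this
  linarith

theorem integral_pos_of_continuousOn_of_pos {f : ℝ → ℝ} {a b : ℝ} (hab : a < b)
    (hf : ContinuousOn f (Icc a b)) (hpos : ∀ t ∈ Icc a b, 0 < f t) :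
    0 < ∫ s in a..b, f s :=
  intervalIntegral.intervalIntegral_pos_of_pos_on
    ((uIcc_of_le hab.le).symm ▸ hf).intervalIntegrable
    (fun t ht => hpos t (Ioo_subset_Icc_self ht)) hab

theorem initial_withdrawal_rate_general
    (r γ D F0 c0 : ℝ) (hD : 0 < D)
    (p : ℝ → ℝ) (hp : ContinuousOn p (Set.Icc 0 D))
    (hppos : ∀ t ∈ Set.Icc (0:ℝ) D, 0 < p t)
    (F : ℝ → ℝ) (hF0 : F 0 = F0) (hFD : F D = 0)
    (hode : ∀ t ∈ Set.Icc (0:ℝ) D, HasDerivAt F (r * F t - c0 * p t ^ (1 / γ)) t) :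
    c0 = F0 / ∫ s in (0:ℝ)..D, Real.exp (-(r * s)) * p s ^ (1 / γ) := by
  have hcons : ContinuousOn (fun s => p s ^ (1 / γ)) (Icc 0 D) :=
    hp.rpow_const fun t ht => Or.inl (hppos t ht).ne'
  have hbudget := integral_exp_neg_mul_eq_of_hasDerivAt_linear hD.le
    (g := fun s => c0 * p s ^ (1 / γ)) (continuousOn_const.mul hcons) hode
  have hpos : 0 < ∫ s in (0:ℝ)..D, exp (-(r * s)) * p s ^ (1 / γ) :=
    integral_pos_of_continuousOn_of_pos hD
      (by fun_prop)
      fun t ht => mul_pos (exp_pos _) (rpow_pos_of_pos (hppos t ht) _)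
  simp only [mul_left_comm _ c0, intervalIntegral.integral_const_mul, hF0, hFD,
    mul_zero, neg_zero, exp_zero, one_mul, sub_zero] at hbudget
  exact eq_div_of_mul_eq hpos.ne' hbudget

/-- If wealth satisfies F(0) = F0, F(D) = 0 and
F'(t) = r·F(t) − c0·p(t)^{1/γ} on [0, D], then the initial consumption is
c0 = F0 / ∫_0^D e^{−rs}·p(s)^{1/γ} ds (the Initial Withdrawal Rate formula). -/
theorem initial_withdrawal_rate
    (r γ D F0 c0 : ℝ) (hγ : 0 < γ) (hD : 0 < D)
    (p : ℝ → ℝ) (hp : ContinuousOn p (Set.Icc 0 D))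
    (hppos : ∀ t ∈ Set.Icc (0:ℝ) D, 0 < p t)
    (F : ℝ → ℝ) (hF0 : F 0 = F0) (hFD : F D = 0)
    (hode : ∀ t ∈ Set.Icc (0:ℝ) D, HasDerivAt F (r * F t - c0 * p t ^ (1 / γ)) t) :
    c0 = F0 / ∫ s in (0:ℝ)..D, Real.exp (-(r * s)) * p s ^ (1 / γ) :=
  initial_withdrawal_rate_general r γ D F0 c0 hD p hp hppos F hF0 hFD hode
end

section
/- Let r ∈ ℝ, T > 0, F0 > 0, and let p : [0, T] → (0, ∞) be continuous. Define c*(s) = p(s)·F0 / ∫_0^T e^{−rq}·p(q) dq. Then c* satisfies the budget constraint ∫_0^T e^{−rs}·c*(s) ds = F0, and for every measurable c : [0, T] → (0, ∞) with ∫_0^T e^{−rs}·c(s) ds ≤ F0 and s ↦ e^{−rs}·p(s)·ln c(s) integrable, one has ∫_0^T e^{−rs}·p(s)·ln c(s) ds ≤ ∫_0^T e^{−rs}·p(s)·ln c*(s) ds. -/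
/-!
With weight `w(s) = e^{-rs} p(s)` and `c* = κ p`, `κ = F0 / ∫ w`, the inequality
`log x ≤ x - 1` at `x = c(s) / c*(s)` gives pointwise
`w log c - w log c* ≤ κ⁻¹ e^{-rs} c - w`. Integrating, the right-hand side becomes
`κ⁻¹ (∫ e^{-rs} c - F0) ≤ 0`.
-/

open MeasureTheory Set Real

theorem Real.mul_log_sub_mul_log_le {w x y : ℝ} (hw : 0 ≤ w) (hx : 0 < x) (hy : 0 < y) :
    w * log x - w * log y ≤ w * (x / y) - w := by
  have h : log x - log y ≤ x / y - 1 := by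
    rw [← log_div hx.ne' hy.ne']
    exact log_le_sub_one_of_pos (div_pos hx hy)
  linarith [mul_le_mul_of_nonneg_left h hw]

theorem intervalIntegral.integral_mul_log_le_integral_mul_log_const_mul {ρ p c : ℝ → ℝ}
    {a b κ : ℝ} (hab : a ≤ b) (hκ : 0 < κ)
    (hρ : ContinuousOn ρ (Icc a b)) (hρ_nonneg : ∀ s ∈ Icc a b, 0 ≤ ρ s)
    (hp : ContinuousOn p (Icc a b)) (hp_pos : ∀ s ∈ Icc a b, 0 < p s)
    (hc_pos : ∀ s ∈ Icc a b, 0 < c s)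
    (hρc : IntervalIntegrable (fun s => ρ s * c s) volume a b)
    (hbudget : ∫ s in a..b, ρ s * c s ≤ κ * ∫ s in a..b, ρ s * p s)
    (hlog : IntervalIntegrable (fun s => ρ s * p s * log (c s)) volume a b) :
    ∫ s in a..b, ρ s * p s * log (c s) ≤ ∫ s in a..b, ρ s * p s * log (κ * p s) := by
  have hρp : IntervalIntegrable (fun s => ρ s * p s) volume a b :=
    ((hρ.mul hp).intervalIntegrable_of_Icc hab)
  have hlog_opt : IntervalIntegrable (fun s => ρ s * p s * log (κ * p s)) volume a b :=
    ((hρ.mul hp).mul ((continuousOn_const.mul hp).log fun s hs =>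
      (mul_pos hκ (hp_pos s hs)).ne')).intervalIntegrable_of_Icc hab
  have hpointwise : ∀ s ∈ Icc a b, ρ s * p s * log (c s) - ρ s * p s * log (κ * p s)
      ≤ κ⁻¹ * (ρ s * c s) - ρ s * p s := by
    intro s hs
    have hps := hp_pos s hs
    convert mul_log_sub_mul_log_le (mul_nonneg (hρ_nonneg s hs) hps.le) (hc_pos s hs)
      (mul_pos hκ hps) using 2
    field_simp
  have hintegral := intervalIntegral.integral_mono_on hab (hlog.sub hlog_opt)
    ((hρc.const_mul κ⁻¹).sub hρp) hpointwise
  rw [intervalIntegral.integral_sub hlog hlog_opt,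
    intervalIntegral.integral_sub (hρc.const_mul κ⁻¹) hρp,
    intervalIntegral.integral_const_mul] at hintegral
  have hbudget' : κ⁻¹ * ∫ s in a..b, ρ s * c s ≤ ∫ s in a..b, ρ s * p s := by
    rwa [inv_mul_le_iff₀ hκ]
  linarith

/-- With logarithmic utility, the plan
c*(s) = p(s)·F0 / ∫_0^T e^{−rq}·p(q) dq exhausts the budget
(∫_0^T e^{−rs}·c*(s) ds = F0) and maximizes ∫_0^T e^{−rs}·p(s)·ln c(s) ds over all
measurable positive plans c with discounted cost at most F0 and integrable objective. -/
theorem log_optimal_consumption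
    (r T F0 : ℝ) (hT : 0 < T) (hF0 : 0 < F0)
    (p : ℝ → ℝ) (hp : ContinuousOn p (Set.Icc 0 T))
    (hppos : ∀ s ∈ Set.Icc (0:ℝ) T, 0 < p s)
    (cstar : ℝ → ℝ)
    (hcstar : ∀ s, cstar s = p s * F0 / ∫ q in (0:ℝ)..T, Real.exp (-(r * q)) * p q) :
    (∫ s in (0:ℝ)..T, Real.exp (-(r * s)) * cstar s) = F0 ∧
    ∀ c : ℝ → ℝ, Measurable c → (∀ s, 0 < c s) →
      IntervalIntegrable (fun s => Real.exp (-(r * s)) * c s) volume 0 T →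
      (∫ s in (0:ℝ)..T, Real.exp (-(r * s)) * c s) ≤ F0 →
      IntervalIntegrable (fun s => Real.exp (-(r * s)) * p s * Real.log (c s)) volume 0 T →
      (∫ s in (0:ℝ)..T, Real.exp (-(r * s)) * p s * Real.log (c s))
        ≤ ∫ s in (0:ℝ)..T, Real.exp (-(r * s)) * p s * Real.log (cstar s) := by
  set I := ∫ q in (0:ℝ)..T, exp (-(r * q)) * p q
  have hdiscount : ContinuousOn (fun s => exp (-(r * s))) (Icc 0 T) := by fun_prop
  have hI : 0 < I :=
    intervalIntegral.intervalIntegral_pos_of_pos_on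
      ((hdiscount.mul hp).intervalIntegrable_of_Icc hT.le)
      (fun s hs => mul_pos (exp_pos _) (hppos s (Ioo_subset_Icc_self hs))) hT
  obtain rfl : cstar = fun s => F0 / I * p s := funext fun s => by rw [hcstar]; ring
  refine ⟨?_, fun c _ hc_pos hc_int hbudget hlog => ?_⟩
  · simp_rw [mul_left_comm _ (F0 / I)]
    rw [intervalIntegral.integral_const_mul]
    exact div_mul_cancel₀ F0 hI.ne'
  · refine intervalIntegral.integral_mul_log_le_integral_mul_log_const_mul hT.le
      (div_pos hF0 hI) hdiscount (fun s _ => (exp_pos _).le) hp hppos (fun s _ => hc_pos s)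
      hc_int ?_ hlog
    rwa [div_mul_cancel₀ F0 hI.ne']
end
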